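/- Gelfand–Naimark embedding for finite group algebras: Let G be a finite group, ι a finite index set, and for each i ∈ ι let ρ_i be a finite-dimensional complex representation of G on a space V_i. Assume the family is complete: every irreducible (simple) finite-dimensional complex representation of G is isomorphic to ρ_i for some i ∈ ι. Then the ℂ-algebra homomorphism Φ from the group algebra ℂ[G] to the product ∏_{i ∈ ι} End_ℂ(V_i) (with pointwise composition), given on f ∈ ℂ[G] by Φ(f)_i = ∑_{g ∈ G} f(g) • ρ_i(g), is injective; hence ℂ[G] is isomorphic as a ℂ-algebra to a subalgebra of ∏_{i} End_ℂ(V_i). -/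

import Mathlib

/-!
If `Φ f = 0`, then `f` acts by zero on every simple representation, since each is isomorphic to
some `ρ i`. For a maximal left ideal `I` of `ℂ[G]`, the simple module `ℂ[G] ⧸ I` is such a
representation, and `f` acting by zero on the class of `1` means `f ∈ I`. So `f` lies in the
Jacobson radical of `ℂ[G]`, which vanishes because `ℂ[G]` is semisimple by Maschke's theorem.
-/

universe u

open CategoryTheory

open scoped MonoidAlgebra

instance RestrictScalars.moduleFinite (R S M : Type*) [CommSemiring R] [Semiring S] [Algebra R S]
    [AddCommMonoid M] [Module S M] [Module.Finite R S] [Module.Finite S M] :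
    Module.Finite R (RestrictScalars R S M) :=
  letI := RestrictScalars.moduleOrig R S M
  haveI : Module.Finite S (RestrictScalars R S M) := ‹Module.Finite S M›
  Module.Finite.trans S _

namespace Representation

variable {k G V : Type*} [CommSemiring k] [Monoid G]

theorem asAlgebraHom_eq_sum [Fintype G] [AddCommMonoid V] [Module k V]
    (ρ : Representation k G V) (f : k[G]) : ρ.asAlgebraHom f = ∑ g : G, f.coeff g • ρ g := by
  rw [asAlgebraHom_def, MonoidAlgebra.lift_apply]
  exact Finsupp.sum_fintype _ _ (by simp)

theorem ofModule_asAlgebraHom_eq_zero_iff (M : Type*) [AddCommMonoid M] [Module k[G] M]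
    (f : k[G]) : (ofModule (k := k) (G := G) M).asAlgebraHom f = 0 ↔ ∀ m : M, f • m = 0 := by
  simp [LinearMap.ext_iff, (RestrictScalars.addEquiv k k[G] M).symm.forall_congr_left]

end Representation

namespace FDRep

variable {k G : Type u} [Field k]

theorem asAlgebraHom_of_iso [Monoid G] {V W : FDRep k G} (e : V ≅ W) (f : k[G]) :
    Representation.asAlgebraHom W.ρ f =
      (isoToLinearEquiv e).conj (Representation.asAlgebraHom V.ρ f) := by
  induction f using MonoidAlgebra.induction_on with
  | of g => simp only [Representation.asAlgebraHom_of, Iso.conj_ρ e]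
  | add f₁ f₂ h₁ h₂ => simp only [map_add, h₁, h₂]
  | smul c f h => simp only [map_smul, h]

theorem simple_of_isIrreducible [Monoid G] {V : Type u} [AddCommGroup V] [Module k V]
    [FiniteDimensional k V] (σ : Representation k G V) [σ.IsIrreducible] : Simple (FDRep.of σ) := by
  let F := forget₂ (FDRep k G) (Rep k G) ⋙ Rep.equivalenceModuleMonoidAlgebra.functor
  have : Simple (F.obj (FDRep.of σ)) := simple_iff_isSimpleModule.2 <|
    σ.irreducible_iff_isSimpleModule_asModule.1 ‹_›
  exact F.simple_of_simple_obj _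

theorem exists_simple_of_isCoatom [Monoid G] [Finite G] {I : Submodule k[G] k[G]}
    (hI : IsCoatom I) :
    ∃ W : FDRep k G, Simple W ∧ ∀ f : k[G], Representation.asAlgebraHom W.ρ f = 0 → f ∈ I := by
  let M := RestrictScalars k k[G] (k[G] ⧸ I)
  -- `RestrictScalars.module` lives over `RestrictScalars`' own `AddCommMonoid`, whereas `FDRep.of`
  -- expects the one induced by `AddCommGroup`; the two agree only up to unfolding.
  let _ : @Module k M _ AddCommGroup.toAddCommMonoid := RestrictScalars.module k k[G] (k[G] ⧸ I)
  have : FiniteDimensional k M := RestrictScalars.moduleFinite k k[G] (k[G] ⧸ I)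
  have := (Representation.isSimpleModule_iff_irreducible_ofModule (k[G] ⧸ I)).1
    (isSimpleModule_iff_isCoatom.2 hI)
  refine ⟨FDRep.of (Representation.ofModule (k[G] ⧸ I)), simple_of_isIrreducible _, fun f hf => ?_⟩
  have := (Representation.ofModule_asAlgebraHom_eq_zero_iff _ f).1 hf (Submodule.Quotient.mk 1)
  rwa [← Submodule.Quotient.mk_smul, smul_eq_mul, mul_one, Submodule.Quotient.mk_eq_zero] at this

theorem eq_zero_of_forall_simple_asAlgebraHom_eq_zero [Group G] [Finite G]
    [NeZero (Nat.card G : k)] {f : k[G]}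
    (hf : ∀ W : FDRep k G, Simple W → Representation.asAlgebraHom W.ρ f = 0) : f = 0 := by
  rw [← Submodule.mem_bot k[G], ← IsSemisimpleRing.jacobson_eq_bot]
  refine Submodule.mem_sInf.2 fun I hI => ?_
  obtain ⟨W, hW, hker⟩ := exists_simple_of_isCoatom hI
  exact hker f (hf W hW)

end FDRep

theorem gelfand_naimark_embedding_general (G : Type) [Group G] [Fintype G]
    (ι : Type) (V : ι → Type) [∀ i, AddCommGroup (V i)]
    [∀ i, Module ℂ (V i)] [∀ i, FiniteDimensional ℂ (V i)]
    (ρ : ∀ i, Representation ℂ G (V i))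
    (hcomplete : ∀ W : FDRep ℂ G, Simple W → ∃ i, Nonempty (W ≅ FDRep.of (ρ i))) :
    Function.Injective
      (fun f : MonoidAlgebra ℂ G => fun i => ∑ g : G, f.coeff g • (ρ i g)) := by
  intro f₁ f₂ h
  rw [← sub_eq_zero]
  refine FDRep.eq_zero_of_forall_simple_asAlgebraHom_eq_zero fun W hW => ?_
  obtain ⟨i, ⟨e⟩⟩ := hcomplete W hW
  have hi : (ρ i).asAlgebraHom (f₁ - f₂) = 0 := by
    rw [map_sub, Representation.asAlgebraHom_eq_sum, Representation.asAlgebraHom_eq_sum]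
    exact sub_eq_zero.2 (congr_fun h i)
  rw [← LinearEquiv.map_eq_zero_iff (FDRep.isoToLinearEquiv e).conj, ← FDRep.asAlgebraHom_of_iso]
  exact hi

/-- **Gelfand–Naimark embedding for finite group algebras.** Let `G` be a finite
group and `(ρ i)_{i ∈ ι}` a finite family of finite-dimensional complex
representations of `G` containing (up to isomorphism) every irreducible
representation. Then the ℂ-algebra homomorphism `Φ : ℂ[G] → ∏ i, End ℂ (V i)`,
`Φ(f)_i = ∑_g f(g) • ρ_i(g)`, is injective; hence `ℂ[G]` is isomorphic to a
subalgebra of `∏ i, End ℂ (V i)`. -/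
theorem gelfand_naimark_embedding (G : Type) [Group G] [Fintype G]
    (ι : Type) [Fintype ι] (V : ι → Type) [∀ i, AddCommGroup (V i)]
    [∀ i, Module ℂ (V i)] [∀ i, FiniteDimensional ℂ (V i)]
    (ρ : ∀ i, Representation ℂ G (V i))
    (hcomplete : ∀ W : FDRep ℂ G, Simple W → ∃ i, Nonempty (W ≅ FDRep.of (ρ i))) :
    Function.Injective
      (fun f : MonoidAlgebra ℂ G => fun i => ∑ g : G, f.coeff g • (ρ i g)) :=
  gelfand_naimark_embedding_general G ι V ρ hcomplete
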